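/- In the group G = ⟨a,b,c | bab⁻¹ = a², cbc⁻¹ = b²⟩ with H = ⟨a⟩, for every positive integer n the identity a^(2^(2^n)) = c^n b c^(-n) a c^n b⁻¹ c^(-n) holds; consequently Dist^H_G(4n+2) ≥ 2^(2^n), so the upper distortion Dist^H_G is at least doubly exponential and hence not dominated by any exponential function. -/

import Mathlib

/-- Domination relation: `f ≼ g` iff there are positive constants `A, B, C` with
`f x ≤ g (A*x) + B*x` for all `x > C`. -/
def Dominates (f g : ℝ → ℝ) : Prop :=
  ∃ A B C : ℝ, 0 < A ∧ 0 < B ∧ 0 < C ∧ ∀ x : ℝ, C < x → f x ≤ g (A * x) + B * x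

/-- `f ∼ g` iff `f ≼ g` and `g ≼ f`. -/
def FEquiv (f g : ℝ → ℝ) : Prop := Dominates f g ∧ Dominates g f

/-- The word length of `g` with respect to the (symmetrized) alphabet `S`. -/
noncomputable def wordLength {G : Type*} [Group G] (S : Set G) (g : G) : ℕ :=
  sInf {n | ∃ w : List G, (∀ x ∈ w, x ∈ S ∨ x⁻¹ ∈ S) ∧ w.prod = g ∧ w.length = n}

/-- The lower distortion of the subset `K` of `G`:
`dist(r) = min { |k|_T : k ∈ K, |k|_S ≥ r }` (with `min ∅ = 0`). -/
noncomputable def lowerDist {G : Type*} [Group G] (S K T : Set G) (r : ℝ) : ℝ :=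
  sInf {y : ℝ | ∃ k ∈ K, r ≤ (wordLength S k : ℝ) ∧ y = (wordLength T k : ℝ)}

/-- The upper distortion of the subset `K` of `G`:
`Dist(r) = max { |k|_T : k ∈ K, |k|_S ≤ r }`. -/
noncomputable def upperDist {G : Type*} [Group G] (S K T : Set G) (r : ℝ) : ℝ :=
  sSup {y : ℝ | ∃ k ∈ K, (wordLength S k : ℝ) ≤ r ∧ y = (wordLength T k : ℝ)}


/-- The relators of Gromov's group `⟨a,b,c | bab⁻¹ = a², cbc⁻¹ = b²⟩`
(generators `0 ↦ a`, `1 ↦ b`, `2 ↦ c`). -/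
def gromovRels : Set (FreeGroup (Fin 3)) :=
  {FreeGroup.of 1 * FreeGroup.of 0 * (FreeGroup.of 1)⁻¹ * ((FreeGroup.of 0) ^ 2)⁻¹,
   FreeGroup.of 2 * FreeGroup.of 1 * (FreeGroup.of 2)⁻¹ * ((FreeGroup.of 1) ^ 2)⁻¹}

/-- Gromov's group `G = ⟨a,b,c | bab⁻¹ = a², cbc⁻¹ = b²⟩`. -/
abbrev GromovGroup := PresentedGroup gromovRels

namespace GromovGroup

def a : GromovGroup := PresentedGroup.of 0
def b : GromovGroup := PresentedGroup.of 1
def c : GromovGroup := PresentedGroup.of 2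

/-- The generating set `S = {a,b,c}`. -/
def gens : Set GromovGroup := {a, b, c}

/-- The upper distortion `Dist^H_G` of `H = ⟨a⟩` in `G`. -/
noncomputable def Dist : ℝ → ℝ :=
  upperDist gens ((Subgroup.zpowers a : Subgroup GromovGroup) : Set GromovGroup) {a}

end GromovGroup

open GromovGroup

/-!
Conjugation by `b` doubles exponents of `a` and conjugation by `c` doubles exponents of `b`, so
`cⁿ b c⁻ⁿ = b^(2ⁿ)` and conjugating `a` by it gives `a^(2^(2ⁿ))`, an element of word length
about `4n` in `a, b, c`. Its length in `⟨a⟩` really is `2^(2ⁿ)` because `a` has infinite order,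
as the action of `G` on `ℝ` by `a : x ↦ x + 1`, `b : x ↦ 2x`, `c : x ↦ x|x|` shows. A lower
bound `2^(2ⁿ)` at the radii `4n + 2` cannot be absorbed by `x^(y A t + z) + B t`, which is only
exponential in `n`.
-/

open scoped Pointwise

lemma pow_conj_eq_pow_pow_of_conj_eq_pow {G : Type*} [Group G] {g x : G} {k : ℕ}
    (h : g * x * g⁻¹ = x ^ k) (m : ℕ) : g ^ m * x * (g ^ m)⁻¹ = x ^ k ^ m := by
  induction m with
  | zero => simp
  | succ m ih =>
    calc g ^ (m + 1) * x * (g ^ (m + 1))⁻¹ = g * (g ^ m * x * (g ^ m)⁻¹) * g⁻¹ := by group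
      _ = x ^ k ^ (m + 1) := by rw [ih, ← conj_pow, h, ← pow_mul, pow_succ']

lemma Set.Finite.pow {G : Type*} [Group G] {s : Set G} (hs : s.Finite) (n : ℕ) :
    (s ^ n).Finite := by
  induction n with
  | zero => exact Set.finite_one
  | succ n ih => rw [pow_succ]; exact ih.mul hs

lemma Set.list_prod_mem_pow_length {G : Type*} [Group G] {s : Set G} {w : List G}
    (hw : ∀ x ∈ w, x ∈ s) : w.prod ∈ s ^ w.length := by
  induction w with
  | nil => exact Set.one_mem_one
  | cons x w ih =>
    rw [List.prod_cons, List.length_cons, pow_succ']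
    exact Set.mul_mem_mul (hw x List.mem_cons_self)
      (ih fun y hy => hw y (List.mem_cons_of_mem _ hy))

section WordLength

variable {G : Type*} [Group G] {S : Set G}

lemma wordLength_le_length {w : List G} (hw : ∀ x ∈ w, x ∈ S ∨ x⁻¹ ∈ S) :
    wordLength S w.prod ≤ w.length :=
  Nat.sInf_le ⟨w, hw, rfl, rfl⟩

lemma exists_word_length_eq_wordLength {w : List G} (hw : ∀ x ∈ w, x ∈ S ∨ x⁻¹ ∈ S) :
    ∃ v : List G, (∀ x ∈ v, x ∈ S ∨ x⁻¹ ∈ S) ∧ v.prod = w.prod ∧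
      v.length = wordLength S w.prod :=
  Nat.sInf_mem (s := {n | ∃ v : List G, (∀ x ∈ v, x ∈ S ∨ x⁻¹ ∈ S) ∧ v.prod = w.prod ∧
    v.length = n}) ⟨_, w, hw, rfl, rfl⟩

lemma exists_word_length_eq_wordLength_of_closure_eq_top (hS : Subgroup.closure S = ⊤) (g : G) :
    ∃ v : List G, (∀ x ∈ v, x ∈ S ∨ x⁻¹ ∈ S) ∧ v.prod = g ∧ v.length = wordLength S g := by
  have hg : g ∈ Submonoid.closure (S ∪ S⁻¹) := by
    rw [← Subgroup.closure_toSubmonoid, hS]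
    trivial
  obtain ⟨w, hw, rfl⟩ := Submonoid.exists_list_of_mem_closure hg
  exact exists_word_length_eq_wordLength hw

lemma wordLength_pow_le_of_mem {s : G} (hs : s ∈ S) (n : ℕ) : wordLength S (s ^ n) ≤ n := by
  simpa using wordLength_le_length (S := S) (w := List.replicate n s)
    fun x hx => .inl (List.eq_of_mem_replicate hx ▸ hs)

lemma wordLength_mul_le (hS : Subgroup.closure S = ⊤) (g h : G) :
    wordLength S (g * h) ≤ wordLength S g + wordLength S h := by
  obtain ⟨v, hv, rfl, hvl⟩ := exists_word_length_eq_wordLength_of_closure_eq_top hS g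
  obtain ⟨w, hw, rfl, hwl⟩ := exists_word_length_eq_wordLength_of_closure_eq_top hS h
  rw [← hvl, ← hwl, ← List.length_append, ← List.prod_append]
  exact wordLength_le_length fun x hx => (List.mem_append.mp hx).elim (hv x) (hw x)

lemma wordLength_inv_le (hS : Subgroup.closure S = ⊤) (g : G) :
    wordLength S g⁻¹ ≤ wordLength S g := by
  obtain ⟨w, hw, rfl, hwl⟩ := exists_word_length_eq_wordLength_of_closure_eq_top hS g
  rw [← hwl, List.prod_inv_reverse]
  simpa using wordLength_le_length (S := S) (w := (w.map fun x => x⁻¹).reverse) (by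
    simp only [List.mem_reverse, List.mem_map, forall_exists_index, and_imp]
    rintro _ x hx rfl
    simpa [or_comm] using hw x hx)

lemma finite_setOf_wordLength_le (hSf : S.Finite) (hS : Subgroup.closure S = ⊤) (m : ℕ) :
    {g | wordLength S g ≤ m}.Finite := by
  set A := S ∪ S⁻¹ ∪ {1}
  refine (((hSf.union hSf.inv).union (Set.finite_singleton 1)).pow m).subset ?_
  intro g hg
  obtain ⟨w, hw, rfl, hwl⟩ := exists_word_length_eq_wordLength_of_closure_eq_top hS g
  have hwA : w.prod ∈ A ^ w.length := Set.list_prod_mem_pow_length fun x hx => .inl (hw x hx)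
  have hlen : w.length ≤ m := hwl ▸ hg
  exact Set.pow_subset_pow_right (s := A) (Or.inr rfl) hlen hwA

lemma wordLength_le_upperDist (hSf : S.Finite) (hS : Subgroup.closure S = ⊤) {K T : Set G}
    {k : G} (hk : k ∈ K) {r : ℝ} (hr : (wordLength S k : ℝ) ≤ r) :
    (wordLength T k : ℝ) ≤ upperDist S K T r := by
  refine le_csSup ?_ ⟨k, hk, hr, rfl⟩
  refine ((finite_setOf_wordLength_le hSf hS ⌊r⌋₊).image
    fun g => (wordLength T g : ℝ)).bddAbove.mono ?_
  rintro _ ⟨g, -, hg, rfl⟩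
  exact ⟨g, Nat.le_floor hg, rfl⟩

lemma exists_zpow_eq_prod_of_mem_singleton {g : G} {w : List G}
    (hw : ∀ x ∈ w, x ∈ ({g} : Set G) ∨ x⁻¹ ∈ ({g} : Set G)) :
    ∃ s : ℤ, w.prod = g ^ s ∧ s.natAbs ≤ w.length := by
  induction w with
  | nil => exact ⟨0, by simp⟩
  | cons x w ih =>
    obtain ⟨s, hs, hsw⟩ := ih fun y hy => hw y (List.mem_cons_of_mem _ hy)
    obtain ⟨e, he, rfl⟩ : ∃ e : ℤ, e.natAbs = 1 ∧ g ^ e = x := by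
      rcases hw x List.mem_cons_self with rfl | hx
      · exact ⟨1, rfl, zpow_one _⟩
      · exact ⟨-1, rfl, by rw [zpow_neg_one, ← Set.mem_singleton_iff.mp hx, inv_inv]⟩
    refine ⟨e + s, by rw [List.prod_cons, hs, zpow_add], ?_⟩
    grind [Int.natAbs_add_le, List.length_cons]

lemma wordLength_singleton_pow {g : G} (hg : ¬IsOfFinOrder g) (N : ℕ) :
    wordLength {g} (g ^ N) = N := by
  refine le_antisymm (wordLength_pow_le_of_mem (Set.mem_singleton g) N) ?_
  obtain ⟨w, hw, hprod, hwl⟩ := exists_word_length_eq_wordLength (S := {g})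
    (w := List.replicate N g) fun x hx => .inl (List.eq_of_mem_replicate hx)
  obtain ⟨s, hs, hsw⟩ := exists_zpow_eq_prod_of_mem_singleton hw
  rw [List.prod_replicate] at hprod hwl
  have : s = N := injective_zpow_iff_not_isOfFinOrder.mpr hg (by simpa [hprod] using hs.symm)
  omega

end WordLength

lemma exists_nat_mul_succ_ge (α β : ℝ) : ∃ M : ℕ, ∀ n : ℕ, α * n + β ≤ M * (n + 1) := by
  refine ⟨⌈|α| + |β|⌉₊, fun n => ?_⟩
  have hM := Nat.le_ceil (|α| + |β|)
  have hn : (0 : ℝ) ≤ n := n.cast_nonneg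
  nlinarith [le_abs_self α, le_abs_self β, abs_nonneg α, abs_nonneg β]

lemma exists_rpow_add_linear_le_two_pow {x : ℝ} (hx : 1 ≤ x) (α β γ δ : ℝ) :
    ∃ k : ℕ, ∀ n : ℕ, x ^ (α * n + β) + (γ * n + δ) ≤ 2 ^ (k * (n + 1)) := by
  obtain ⟨u, hu⟩ := pow_unbounded_of_one_lt x one_lt_two
  obtain ⟨M, hM⟩ := exists_nat_mul_succ_ge α β
  obtain ⟨N, hN⟩ := exists_nat_mul_succ_ge γ δ
  refine ⟨u * M + N + 1, fun n => ?_⟩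
  have hrpow : x ^ (α * n + β) ≤ 2 ^ (u * M * (n + 1)) :=
    calc x ^ (α * n + β) ≤ x ^ ((M * (n + 1) : ℕ) : ℝ) :=
          Real.rpow_le_rpow_of_exponent_le hx (by push_cast; exact hM n)
      _ = x ^ (M * (n + 1)) := Real.rpow_natCast x _
      _ ≤ (2 ^ u) ^ (M * (n + 1)) := pow_le_pow_left₀ (by linarith) hu.le _
      _ = 2 ^ (u * M * (n + 1)) := by rw [← pow_mul, mul_assoc]
  have hlin : γ * n + δ ≤ 2 ^ (N * (n + 1)) :=
    calc γ * n + δ ≤ ((N * (n + 1) : ℕ) : ℝ) := by push_cast; exact hN n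
      _ ≤ 2 ^ (N * (n + 1)) := by exact_mod_cast Nat.lt_two_pow_self.le
  have hrpow' : (2 : ℝ) ^ (u * M * (n + 1)) ≤ 2 ^ ((u * M + N) * (n + 1)) :=
    pow_le_pow_right₀ one_le_two (Nat.mul_le_mul_right _ (by omega))
  have hlin' : (2 : ℝ) ^ (N * (n + 1)) ≤ 2 ^ ((u * M + N) * (n + 1)) :=
    pow_le_pow_right₀ one_le_two (Nat.mul_le_mul_right _ (by omega))
  calc x ^ (α * n + β) + (γ * n + δ) ≤ 2 ^ ((u * M + N) * (n + 1) + 1) := by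
        rw [pow_succ]
        linarith
    _ ≤ 2 ^ ((u * M + N + 1) * (n + 1)) := pow_le_pow_right₀ one_le_two (by nlinarith)

lemma mul_succ_lt_two_pow_two_mul {k m : ℕ} (hm : 2 * k < m) : k * (2 * m + 1) < 2 ^ (2 * m) := by
  have := Nat.lt_two_pow_self (n := m)
  rw [pow_mul']
  nlinarith

theorem not_dominates_rpow_of_two_pow_two_pow_le {f : ℝ → ℝ}
    (hf : ∀ n : ℕ, 0 < n → (2 : ℝ) ^ 2 ^ n ≤ f (4 * n + 2)) {x : ℝ} (hx : 1 ≤ x) (y z : ℝ) :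
    ¬ Dominates f fun t => x ^ (y * t + z) := by
  rintro ⟨A, B, C, -, -, -, hdom⟩
  obtain ⟨k, hk⟩ := exists_rpow_add_linear_le_two_pow hx (4 * y * A) (2 * y * A + z) (4 * B) (2 * B)
  set m := 2 * k + ⌈C⌉₊ + 1
  have hC : C < 4 * ((2 * m : ℕ) : ℝ) + 2 := by
    have hm : (⌈C⌉₊ : ℝ) + 1 ≤ m := by exact_mod_cast (by omega : ⌈C⌉₊ + 1 ≤ m)
    have := Nat.le_ceil C
    push_cast
    linarith
  have hupper : f (4 * (2 * m : ℕ) + 2) ≤ 2 ^ (k * (2 * m + 1)) := by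
    refine (hdom _ hC).trans (le_of_eq_of_le ?_ (hk (2 * m)))
    ring_nf
  have : 2 ^ (2 * m) ≤ k * (2 * m + 1) :=
    (pow_le_pow_iff_right₀ one_lt_two).mp ((hf (2 * m) (by omega)).trans hupper)
  exact (mul_succ_lt_two_pow_two_mul (by omega)).not_ge this

namespace GromovGroup

lemma b_mul_a_mul_b_inv : b * a * b⁻¹ = a ^ 2 := by
  have h := PresentedGroup.mk_eq_mk_of_mul_inv_mem (rels := gromovRels) (Set.mem_insert _ _)
  simpa only [a, b, PresentedGroup.of, map_mul, map_inv, map_pow] using h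

lemma c_mul_b_mul_c_inv : c * b * c⁻¹ = b ^ 2 := by
  have h := PresentedGroup.mk_eq_mk_of_mul_inv_mem (rels := gromovRels)
    (Set.mem_insert_of_mem _ rfl)
  simpa only [b, c, PresentedGroup.of, map_mul, map_inv, map_pow] using h

lemma c_pow_conj_b (n : ℕ) : c ^ n * b * (c ^ n)⁻¹ = b ^ 2 ^ n :=
  pow_conj_eq_pow_pow_of_conj_eq_pow c_mul_b_mul_c_inv n

lemma b_pow_conj_a (n : ℕ) : b ^ n * a * (b ^ n)⁻¹ = a ^ 2 ^ n :=
  pow_conj_eq_pow_pow_of_conj_eq_pow b_mul_a_mul_b_inv n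

lemma a_pow_two_pow_two_pow (n : ℕ) :
    a ^ 2 ^ 2 ^ n = c ^ n * b * (c ^ n)⁻¹ * a * c ^ n * b⁻¹ * (c ^ n)⁻¹ := by
  rw [← b_pow_conj_a, ← c_pow_conj_b]
  group

lemma closure_gens : Subgroup.closure gens = ⊤ := by
  rw [← PresentedGroup.closure_range_of gromovRels]
  congr 1
  ext x
  simp [gens, a, b, c, Fin.exists_fin_succ, eq_comm]

lemma finite_gens : gens.Finite := by
  simp [gens]

lemma wordLength_gens_a_pow_two_pow_two_pow_le (n : ℕ) (hn : 0 < n) :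
    wordLength gens (a ^ 2 ^ 2 ^ n) ≤ 4 * n + 1 := by
  obtain ⟨m, rfl⟩ := Nat.exists_eq_add_one_of_ne_zero hn.ne'
  -- The word of `a_pow_two_pow_two_pow` has length `4n + 3`; spelling `b^(2ⁿ)` as
  -- `cⁿ⁻¹ b² c¹⁻ⁿ` saves two letters.
  have hconj : a ^ 2 ^ 2 ^ (m + 1) =
      c ^ m * b ^ 2 * (c ^ m)⁻¹ * a * (c ^ m * b ^ 2 * (c ^ m)⁻¹)⁻¹ := by
    rw [← b_pow_conj_a, pow_succ, pow_mul, ← c_pow_conj_b, conj_pow]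
  have hβ : wordLength gens (c ^ m * b ^ 2 * (c ^ m)⁻¹) ≤ 2 * m + 2 := by
    have := wordLength_mul_le closure_gens (c ^ m * b ^ 2) (c ^ m)⁻¹
    have := wordLength_mul_le closure_gens (c ^ m) (b ^ 2)
    have := wordLength_inv_le closure_gens (c ^ m)
    have := wordLength_pow_le_of_mem (S := gens) (by simp [gens]) (s := c) m
    have := wordLength_pow_le_of_mem (S := gens) (by simp [gens]) (s := b) 2
    omega
  set β := c ^ m * b ^ 2 * (c ^ m)⁻¹
  have := wordLength_mul_le closure_gens (β * a) β⁻¹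
  have := wordLength_mul_le closure_gens β a
  have := wordLength_inv_le closure_gens β
  have := wordLength_pow_le_of_mem (S := gens) (by simp [gens]) (s := a) 1
  rw [pow_one] at this
  rw [hconj]
  omega

/-- `x ↦ x|x|` conjugates `x ↦ 2x` to `x ↦ 4x`. -/
noncomputable def signedSq : Equiv.Perm ℝ where
  toFun x := x * |x|
  invFun y := if 0 ≤ y then √y else -√(-y)
  left_inv x := by
    rcases le_or_gt 0 x with hx | hx
    · simp [abs_of_nonneg hx, mul_self_nonneg, Real.sqrt_mul_self hx]
    · simp only [abs_of_neg hx, mul_neg, neg_neg, Real.sqrt_mul_self_eq_abs]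
      rw [if_neg (by nlinarith)]
  right_inv y := by
    rcases le_or_gt 0 y with hy | hy
    · simp [hy, abs_of_nonneg (Real.sqrt_nonneg y), Real.mul_self_sqrt hy]
    · have hy' : 0 ≤ -y := by linarith
      simp [hy.not_ge, abs_of_nonneg (Real.sqrt_nonneg _), Real.mul_self_sqrt hy']

lemma mulLeft₀_two_mul_addRight_one :
    Equiv.mulLeft₀ (2 : ℝ) two_ne_zero * Equiv.addRight 1 =
      Equiv.addRight 1 ^ 2 * Equiv.mulLeft₀ (2 : ℝ) two_ne_zero :=
  Equiv.ext fun x => show 2 * (x + 1) = 2 * x + 1 + 1 by ring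

lemma signedSq_mul_mulLeft₀_two :
    signedSq * Equiv.mulLeft₀ (2 : ℝ) two_ne_zero =
      Equiv.mulLeft₀ (2 : ℝ) two_ne_zero ^ 2 * signedSq :=
  Equiv.ext fun x => show 2 * x * |2 * x| = 2 * (2 * (x * |x|)) by rw [abs_mul, abs_two]; ring

noncomputable def toPermReal : GromovGroup →* Equiv.Perm ℝ :=
  PresentedGroup.toGroup (f := ![Equiv.addRight 1, Equiv.mulLeft₀ 2 two_ne_zero, signedSq]) <| by
    rintro r (rfl | rfl) <;>
      simp only [map_mul, map_inv, map_pow, FreeGroup.lift_apply_of, mul_inv_eq_iff_eq_mul]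
    exacts [mulLeft₀_two_mul_addRight_one, signedSq_mul_mulLeft₀_two]

lemma toPermReal_a_pow (n : ℕ) : toPermReal (a ^ n) = Equiv.addRight (n : ℝ) := by
  rw [map_pow, toPermReal, a, PresentedGroup.toGroup.of, Matrix.cons_val_zero,
    Equiv.nsmul_addRight, nsmul_one]

lemma not_isOfFinOrder_a : ¬IsOfFinOrder a := by
  rw [isOfFinOrder_iff_pow_eq_one]
  rintro ⟨n, hn, h⟩
  have := congrArg (· 0) (toPermReal_a_pow n)
  simp only [h, map_one, Equiv.Perm.one_apply, Equiv.coe_addRight, zero_add] at this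
  exact hn.ne (by exact_mod_cast this)

lemma two_pow_two_pow_le_dist (n : ℕ) (hn : 0 < n) : (2 : ℝ) ^ 2 ^ n ≤ Dist (4 * n + 2) := by
  have hlen : (wordLength gens (a ^ 2 ^ 2 ^ n) : ℝ) ≤ 4 * n + 2 := by
    have := wordLength_gens_a_pow_two_pow_two_pow_le n hn
    exact_mod_cast this.trans (Nat.le_succ _)
  have := wordLength_le_upperDist finite_gens closure_gens (T := {a})
    (Subgroup.npow_mem_zpowers a (2 ^ 2 ^ n)) hlen
  rw [wordLength_singleton_pow not_isOfFinOrder_a] at this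
  exact_mod_cast this

end GromovGroup

/-- In `G = ⟨a,b,c | bab⁻¹ = a², cbc⁻¹ = b²⟩` with `H = ⟨a⟩`, the identity
`a^(2^(2^n)) = cⁿ b c⁻ⁿ a cⁿ b⁻¹ c⁻ⁿ` holds for all positive `n`; consequently
`Dist^H_G(4n+2) ≥ 2^(2^n)`, and hence `Dist^H_G` is not dominated by any
exponential function. -/
theorem gromov_group_distortion :
    (∀ n : ℕ, 0 < n →
      a ^ (2 ^ (2 ^ n)) = c ^ n * b * (c ^ n)⁻¹ * a * c ^ n * b⁻¹ * (c ^ n)⁻¹) ∧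
    (∀ n : ℕ, 0 < n → ((2 : ℝ) ^ (2 ^ n) : ℝ) ≤ GromovGroup.Dist (4 * n + 2)) ∧
    (∀ x y z : ℝ, 1 < x → 0 < y → ¬ Dominates GromovGroup.Dist (fun t => x ^ (y * t + z))) :=
  ⟨fun n _ => a_pow_two_pow_two_pow n, two_pow_two_pow_le_dist,
    fun _ y z hx _ => not_dominates_rpow_of_two_pow_two_pow_le two_pow_two_pow_le_dist hx.le y z⟩
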